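/- arXiv:2009.04018 — 4 statements merged into one kernel-verified Lean document; each statement's English description precedes it below -/
import Mathlib

section
/- Let γ ∈ (1, ∞). Then γ/(1+γ) ≥ |(2γ + 5 + √(25 − 16γ²))/(10(1+γ))| whenever 25 − 16γ² ≥ 0 (i.e., γ ≤ 5/4), so for γ ∈ (1, 5/4] the dominant real eigenvalue modulus is γ/(1+γ). -/
theorem stmt10 (γ : ℝ) (hγ : 1 < γ) (hdisc : 0 ≤ 25 - 16 * γ ^ 2) :
    γ / (1 + γ) ≥ |(2 * γ + 5 + Real.sqrt (25 - 16 * γ ^ 2)) / (10 * (1 + γ))| := by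
  have h1 : (0:ℝ) < 1 + γ := by linarith
  have hs0 := Real.sqrt_nonneg (25 - 16 * γ ^ 2)
  have hs : Real.sqrt (25 - 16 * γ ^ 2) ≤ 8 * γ - 5 := by
    rw [show 8 * γ - 5 = Real.sqrt ((8 * γ - 5) ^ 2) from
      (Real.sqrt_sq (by linarith)).symm]
    exact Real.sqrt_le_sqrt (by nlinarith)
  have hx : (0:ℝ) ≤ (2 * γ + 5 + Real.sqrt (25 - 16 * γ ^ 2)) / (10 * (1 + γ)) := by
    apply div_nonneg (by linarith) (by linarith)
  rw [ge_iff_le, abs_of_nonneg hx, div_le_div_iff₀ (by linarith) h1]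
  nlinarith
end

section
/- Let γ ∈ (0,1], α = 1/√5, and η = (2γ + 5 + √(25 − 16γ²))/(10(1+γ)). For the 2p×2p matrix M_p = (1/5)·[[(γ+5)·Id_p, 2γ·Id_p], [−2γ·Id_p, γ·Id_p]], one has rank(M_p − (1+γ)η·Id_{2p}) = rank((M_p − (1+γ)η·Id_{2p})²) = p; in particular η is a semi-simple eigenvalue of (1/(1+γ))·M_p. -/
/-!
With `s = √(25 - 16γ²)`, `λ = (1 + γ)η = (2γ + 5 + s)/10` is an eigenvalue of the `2 × 2` matrix
`(1/5)[[γ + 5, 2γ], [-2γ, γ]]`, and `M_p - λ·Id` is the singular matrix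
`N = [[(5 - s)/10, 2γ/5], [-2γ/5, -(5 + s)/10]]` tensored with `Id_p`. As `N ≠ 0`, `N ⊗ Id_p` has
rank `p`; by Cayley–Hamilton `N² = (tr N) N` with `tr N = -s/5 ≠ 0`, so its square has rank `p`
as well. Rescaling by `1/(1 + γ)` changes neither rank.
-/

open Matrix

namespace Matrix

theorem rank_smul_of_ne_zero {m n K : Type*} [Fintype n] [Field K] {c : K} (hc : c ≠ 0)
    (A : Matrix m n K) : (c • A).rank = A.rank :=
  rank_smul_of_mem_nonZeroDivisors A (mem_nonZeroDivisors_of_ne_zero hc)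

variable {n : Type*} [Fintype n] [DecidableEq n]

theorem fromBlocks_smul_one_sq_of_mul_eq_mul {R : Type*} [CommRing R] {a b c d : R}
    (hdet : a * d = b * c) :
    (fromBlocks (a • 1) (b • 1) (c • 1) (d • 1) : Matrix (n ⊕ n) (n ⊕ n) R) ^ 2 =
      (a + d) • fromBlocks (a • 1) (b • 1) (c • 1) (d • 1) := by
  rw [pow_two, fromBlocks_multiply, fromBlocks_smul]
  simp only [smul_mul_smul, mul_one, ← add_smul, smul_smul]
  congr 2 <;> first | ring1 | linear_combination -hdet

theorem rank_fromBlocks_smul_one_of_mul_eq_mul {K : Type*} [Field K] {a b c d : K}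
    (ha : a ≠ 0) (hdet : a * d = b * c) :
    (fromBlocks (a • 1) (b • 1) (c • 1) (d • 1) : Matrix (n ⊕ n) (n ⊕ n) K).rank =
      Fintype.card n := by
  set A : Matrix (n ⊕ n) (n ⊕ n) K := fromBlocks (a • 1) (b • 1) (c • 1) (d • 1)
  apply le_antisymm
  · have hfactor : A = fromRows (a • 1 : Matrix n n K) (c • 1) *
        fromCols 1 ((b / a) • 1 : Matrix n n K) := by
      have hb : a * (b / a) = b := mul_div_cancel₀ b ha
      have hd : c * (b / a) = d := by
        rw [mul_div_assoc', mul_comm, ← hdet, mul_div_cancel_left₀ d ha]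
      rw [fromRows_mul_fromCols, smul_mul_smul, smul_mul_smul, hb, hd]
      simp only [A, mul_one]
    rw [hfactor]
    exact (rank_mul_le_right _ _).trans (rank_le_card_height _)
  · calc Fintype.card n = (a • (1 : Matrix n n K)).rank := by
          rw [rank_smul_of_ne_zero ha, rank_one]
      _ = (A.submatrix Sum.inl Sum.inl).rank := rfl
      _ ≤ A.rank := rank_submatrix_le _ _ _

end Matrix

theorem stmt11_general (p : ℕ) (γ : ℝ) (hγ0 : 0 < γ) (hγ1 : γ ≤ 1)
    (η : ℝ) (hη : η = (2 * γ + 5 + Real.sqrt (25 - 16 * γ ^ 2)) / (10 * (1 + γ)))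
    (Mp : Matrix (Fin p ⊕ Fin p) (Fin p ⊕ Fin p) ℝ)
    (hMp : Mp = (1 / 5 : ℝ) •
      Matrix.fromBlocks ((γ + 5) • (1 : Matrix (Fin p) (Fin p) ℝ))
        ((2 * γ) • (1 : Matrix (Fin p) (Fin p) ℝ))
        ((-(2 * γ)) • (1 : Matrix (Fin p) (Fin p) ℝ))
        (γ • (1 : Matrix (Fin p) (Fin p) ℝ))) :
    (Mp - ((1 + γ) * η) • (1 : Matrix (Fin p ⊕ Fin p) (Fin p ⊕ Fin p) ℝ)).rank = p ∧
    ((Mp - ((1 + γ) * η) • (1 : Matrix (Fin p ⊕ Fin p) (Fin p ⊕ Fin p) ℝ)) ^ 2).rank = p ∧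
    ((1 / (1 + γ)) • Mp - η • (1 : Matrix (Fin p ⊕ Fin p) (Fin p ⊕ Fin p) ℝ)).rank =
      (((1 / (1 + γ)) • Mp - η • (1 : Matrix (Fin p ⊕ Fin p) (Fin p ⊕ Fin p) ℝ)) ^ 2).rank := by
  set s := Real.sqrt (25 - 16 * γ ^ 2)
  have hs2 : s ^ 2 = 25 - 16 * γ ^ 2 := Real.sq_sqrt (by nlinarith)
  have hs0 : 0 < s := Real.sqrt_pos.mpr (by nlinarith)
  have hs5 : s < 5 := by nlinarith
  have heig : (1 + γ) * η = (2 * γ + 5 + s) / 10 := by rw [hη]; field_simp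
  set A := Mp - ((1 + γ) * η) • (1 : Matrix (Fin p ⊕ Fin p) (Fin p ⊕ Fin p) ℝ) with hAdef
  have hA : A = fromBlocks (((5 - s) / 10) • 1) ((2 * γ / 5) • 1) ((-(2 * γ) / 5) • 1)
      ((-(5 + s) / 10) • 1) := by
    rw [hAdef, hMp, heig, ← fromBlocks_one, fromBlocks_smul, fromBlocks_smul, sub_eq_add_neg,
      fromBlocks_neg, fromBlocks_add]
    congr 1 <;> simp only [smul_smul, smul_zero, neg_zero, add_zero, ← neg_smul, ← add_smul] <;>
      congr 1 <;> ring
  have hdet : (5 - s) / 10 * (-(5 + s) / 10) = 2 * γ / 5 * (-(2 * γ) / 5) := by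
    linear_combination hs2 / 100
  have hrank : A.rank = p := by
    rw [hA, rank_fromBlocks_smul_one_of_mul_eq_mul (by linarith) hdet, Fintype.card_fin]
  have hsq : A ^ 2 = (-s / 5) • A := by
    rw [hA, fromBlocks_smul_one_sq_of_mul_eq_mul hdet]
    congr 1
    ring
  have hscaled : (1 / (1 + γ)) • Mp - η • (1 : Matrix (Fin p ⊕ Fin p) (Fin p ⊕ Fin p) ℝ) =
      (1 / (1 + γ)) • A := by
    rw [hAdef, smul_sub, smul_smul, one_div, inv_mul_cancel_left₀ (by positivity)]
  have hsq_rank : (A ^ 2).rank = p := by rw [hsq, rank_smul_of_ne_zero (by linarith), hrank]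
  have hγ : (1 / (1 + γ) : ℝ) ≠ 0 := by positivity
  refine ⟨hrank, hsq_rank, ?_⟩
  rw [hscaled, smul_pow, rank_smul_of_ne_zero hγ, rank_smul_of_ne_zero (pow_ne_zero 2 hγ), hrank,
    hsq_rank]

theorem stmt11 (p : ℕ) (hp : 1 ≤ p) (γ : ℝ) (hγ0 : 0 < γ) (hγ1 : γ ≤ 1)
    (η : ℝ) (hη : η = (2 * γ + 5 + Real.sqrt (25 - 16 * γ ^ 2)) / (10 * (1 + γ)))
    (Mp : Matrix (Fin p ⊕ Fin p) (Fin p ⊕ Fin p) ℝ)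
    (hMp : Mp = (1 / 5 : ℝ) •
      Matrix.fromBlocks ((γ + 5) • (1 : Matrix (Fin p) (Fin p) ℝ))
        ((2 * γ) • (1 : Matrix (Fin p) (Fin p) ℝ))
        ((-(2 * γ)) • (1 : Matrix (Fin p) (Fin p) ℝ))
        (γ • (1 : Matrix (Fin p) (Fin p) ℝ))) :
    (Mp - ((1 + γ) * η) • (1 : Matrix (Fin p ⊕ Fin p) (Fin p ⊕ Fin p) ℝ)).rank = p ∧
    ((Mp - ((1 + γ) * η) • (1 : Matrix (Fin p ⊕ Fin p) (Fin p ⊕ Fin p) ℝ)) ^ 2).rank = p ∧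
    ((1 / (1 + γ)) • Mp - η • (1 : Matrix (Fin p ⊕ Fin p) (Fin p ⊕ Fin p) ℝ)).rank =
      (((1 / (1 + γ)) • Mp - η • (1 : Matrix (Fin p ⊕ Fin p) (Fin p ⊕ Fin p) ℝ)) ^ 2).rank :=
  stmt11_general p γ hγ0 hγ1 η hη Mp hMp
end

section
/- Finite termination of Douglas–Rachford shadow sequence: Suppose C ⊆ ℝ^n is closed, S ⊆ ℝ^n is an affine subspace, C ∩ S ≠ ∅, and the DR iterates x_{k+1} = P_S(z_k), u_{k+1} ∈ P_C(2x_{k+1} − z_k), z_{k+1} = z_k + u_{k+1} − x_{k+1} satisfy z_k → z*, u_k, x_k → x* = P_S(z*). If C is prox-regular at x* for x* − z* and x* − z* ∈ int(N_C(x*)) (where N_C is the limiting normal cone), then there exists K such that u_k = x* for all k ≥ K. -/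
open Filter

variable {n : ℕ}

/-- `P` is the metric projection onto the set `S`. -/
def IsMetricProj (S : Set (EuclideanSpace ℝ (Fin n)))
    (P : EuclideanSpace ℝ (Fin n) → EuclideanSpace ℝ (Fin n)) : Prop :=
  ∀ x, P x ∈ S ∧ ∀ y ∈ S, ‖x - P x‖ ≤ ‖x - y‖

/-- `w` is a (possibly non-unique) metric projection of `x` onto `C`. -/
def IsProjPt (C : Set (EuclideanSpace ℝ (Fin n)))
    (x w : EuclideanSpace ℝ (Fin n)) : Prop :=
  w ∈ C ∧ ∀ y ∈ C, ‖x - w‖ ≤ ‖x - y‖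

/-- The proximal normal cone of `C` at `x`: `cone (proj_C⁻¹(x) - x)`. -/
def proxNormalCone (C : Set (EuclideanSpace ℝ (Fin n)))
    (x : EuclideanSpace ℝ (Fin n)) : Set (EuclideanSpace ℝ (Fin n)) :=
  {v | ∃ t : ℝ, 0 ≤ t ∧ ∃ y, IsProjPt C y x ∧ v = t • (y - x)}

/-- The limiting normal cone of `C` at `x`: limits of proximal normals at nearby points. -/
def limitingNormalCone (C : Set (EuclideanSpace ℝ (Fin n)))
    (x : EuclideanSpace ℝ (Fin n)) : Set (EuclideanSpace ℝ (Fin n)) :=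
  {v | ∃ xs vs : ℕ → EuclideanSpace ℝ (Fin n),
    (∀ k, xs k ∈ C) ∧ (∀ k, vs k ∈ proxNormalCone C (xs k)) ∧
    Tendsto xs atTop (nhds x) ∧ Tendsto vs atTop (nhds v)}

/-!
Since `P_C` is single-valued on a ball around `x*`, proximal normals at points of `C` near `x*`
have a uniform radius: if `q ∈ P_C(q + σ v)` with `‖v‖ = 1`, then `q ∈ P_C(q + ρ v)` for every
`ρ ≥ σ` up to a fixed size. To see this, run an Euler polygon of the gradient flow of `d_C`
from `q + σ v`. As `P_C` is uniformly continuous along it, `d_C` grows at almost unit speed,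
so after length `ρ - σ` the polygon ends near `q + ρ v` at distance almost `ρ` from `C`, which
rules out points of `C` closer than `ρ` to `q + ρ v`. Passing to the limit, every limiting
normal `w` at `x*` satisfies `⟪w, c - x*⟫ ≤ ‖w‖ / ε * ‖c - x*‖²` on `C`.

If `u_{k+1} ≠ x*`, test this against the limiting normal `(x* - z*) + (δ/2) d / ‖d‖`, where
`d = u_{k+1} - x*` and `δ` is the radius of a ball around `x* - z*` inside `N_C(x*)`. Combined
with the projection inequality for `u_{k+1} ∈ P_C(2 x_{k+1} - z_k)`, this gives
`δ / 2 ≤ ‖2 x_{k+1} - z_k - (2 x* - z*)‖ + M ‖d‖` with `M` independent of `k`, while the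
right side tends to `0`.
-/

open Metric
open scoped RealInnerProductSpace Topology

def ProjUniqueOn (C s : Set (EuclideanSpace ℝ (Fin n))) : Prop :=
  ∀ y ∈ s, ∀ w w', IsProjPt C y w → IsProjPt C y w' → w = w'

section

variable {C : Set (EuclideanSpace ℝ (Fin n))}

theorem ProjUniqueOn.mono {s t : Set (EuclideanSpace ℝ (Fin n))} (h : ProjUniqueOn C t)
    (hst : s ⊆ t) : ProjUniqueOn C s :=
  fun y hy => h y (hst hy)

namespace IsProjPt

variable {y w : EuclideanSpace ℝ (Fin n)}

theorem exists_of_isClosed (hC : IsClosed C) (hne : C.Nonempty) (y : EuclideanSpace ℝ (Fin n)) :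
    ∃ w, IsProjPt C y w := by
  obtain ⟨w, hw, hdist⟩ := hC.exists_infDist_eq_dist hne y
  refine ⟨w, hw, fun c hc => ?_⟩
  rw [← dist_eq_norm, ← dist_eq_norm, ← hdist]
  exact infDist_le_dist_of_mem hc

theorem two_inner_le (h : IsProjPt C y w) {c : EuclideanSpace ℝ (Fin n)} (hc : c ∈ C) :
    2 * ⟪y - w, c - w⟫ ≤ ‖c - w‖ ^ 2 := by
  have key : ‖y - w‖ ^ 2 ≤ ‖(y - w) - (c - w)‖ ^ 2 := by
    rw [sub_sub_sub_cancel_right]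
    gcongr
    exact h.2 c hc
  rw [norm_sub_sq_real (y - w) (c - w)] at key
  linarith

theorem norm_sub_le_two_mul (h : IsProjPt C y w) {c : EuclideanSpace ℝ (Fin n)} (hc : c ∈ C) :
    ‖w - c‖ ≤ 2 * ‖y - c‖ := by
  linarith [norm_sub_le_norm_sub_add_norm_sub w y c, norm_sub_rev w y, h.2 c hc]

theorem add_smul_sub (h : IsProjPt C y w) {s : ℝ} (hs0 : 0 ≤ s) (hs1 : s ≤ 1) :
    IsProjPt C (w + s • (y - w)) w := by
  refine ⟨h.1, fun c hc => ?_⟩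
  have hrest : ‖y - (w + s • (y - w))‖ = (1 - s) * ‖y - w‖ := by
    rw [show y - (w + s • (y - w)) = (1 - s) • (y - w) by module, norm_smul,
      Real.norm_of_nonneg (by linarith)]
  calc ‖w + s • (y - w) - w‖ = s * ‖y - w‖ := by
        rw [add_sub_cancel_left, norm_smul, Real.norm_of_nonneg hs0]
    _ ≤ ‖y - c‖ - ‖y - (w + s • (y - w))‖ := by rw [hrest]; linarith [h.2 c hc]
    _ ≤ ‖w + s • (y - w) - c‖ := by
        linarith [norm_sub_le_norm_sub_add_norm_sub y (w + s • (y - w)) c]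

theorem of_tendsto {ι : Type*} {l : Filter ι} [l.NeBot] (hC : IsClosed C)
    {ys ws : ι → EuclideanSpace ℝ (Fin n)} (hys : Tendsto ys l (𝓝 y)) (hws : Tendsto ws l (𝓝 w))
    (h : ∀ᶠ i in l, IsProjPt C (ys i) (ws i)) : IsProjPt C y w :=
  ⟨hC.mem_of_tendsto hws (h.mono fun _ hi => hi.1), fun c hc =>
    le_of_tendsto_of_tendsto (hys.sub hws).norm (hys.sub tendsto_const_nhds).norm
      (h.mono fun _ hi => hi.2 c hc)⟩

end IsProjPt

theorem ProjUniqueOn.exists_modulus {K : Set (EuclideanSpace ℝ (Fin n))} (hC : IsClosed C)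
    (hne : C.Nonempty) (hK : IsCompact K) (huniq : ProjUniqueOn C K) {θ : ℝ} (hθ : 0 < θ) :
    ∃ η > 0, ∀ y ∈ K, ∀ y' ∈ K, ∀ w w', ‖y - y'‖ ≤ η → IsProjPt C y w → IsProjPt C y' w' →
      ‖w - w'‖ ≤ θ := by
  by_contra! hcon
  obtain ⟨c₀, hc₀⟩ := hne
  obtain ⟨R, hR⟩ := hK.isBounded.subset_closedBall c₀
  choose Y hY Y' hY' W W' hnear hW hW' hfar using
    fun m : ℕ => hcon (1 / (m + 1)) Nat.one_div_pos_of_nat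
  have hbound : ∀ {y w}, y ∈ K → IsProjPt C y w → w ∈ closedBall c₀ (2 * R) := fun hy hw => by
    rw [mem_closedBall_iff_norm]
    exact (hw.norm_sub_le_two_mul hc₀).trans (by gcongr; exact mem_closedBall_iff_norm.1 (hR hy))
  obtain ⟨⟨a, p, p'⟩, ⟨ha, -⟩, φ, hφ, hlim⟩ :=
    (hK.prod ((isCompact_closedBall c₀ (2 * R)).prod
      (isCompact_closedBall c₀ (2 * R)))).tendsto_subseq (x := fun m => (Y m, W m, W' m))
      fun m => ⟨hY m, hbound (hY m) (hW m), hbound (hY' m) (hW' m)⟩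
  have hYa : Tendsto (fun m => Y (φ m)) atTop (𝓝 a) := hlim.fst_nhds
  have hWp : Tendsto (fun m => W (φ m)) atTop (𝓝 p) := hlim.snd_nhds.fst_nhds
  have hW'p : Tendsto (fun m => W' (φ m)) atTop (𝓝 p') := hlim.snd_nhds.snd_nhds
  have hY'a : Tendsto (fun m => Y' (φ m)) atTop (𝓝 a) := by
    have hgap : Tendsto (fun m => Y (φ m) - Y' (φ m)) atTop (𝓝 0) :=
      squeeze_zero_norm (fun m => hnear (φ m))
        (tendsto_one_div_add_atTop_nhds_zero_nat.comp hφ.tendsto_atTop)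
    simpa using hYa.sub hgap
  have hpp' : p = p' :=
    huniq a ha p p' (.of_tendsto hC hYa hWp (.of_forall fun m => hW (φ m)))
      (.of_tendsto hC hY'a hW'p (.of_forall fun m => hW' (φ m)))
  have hgap : θ ≤ ‖p - p'‖ :=
    ge_of_tendsto (hWp.sub hW'p).norm (.of_forall fun m => (hfar (φ m)).le)
  rw [hpp', sub_self, norm_zero] at hgap
  linarith

/-- One step of length `h` of the Euler scheme for the gradient flow of the distance to a set,
along the direction `y - pr y` given by a selection `pr` of the metric projection. -/
noncomputable def distFlowStep (pr : EuclideanSpace ℝ (Fin n) → EuclideanSpace ℝ (Fin n))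
    (h : ℝ) (y : EuclideanSpace ℝ (Fin n)) : EuclideanSpace ℝ (Fin n) :=
  y + (h / ‖y - pr y‖) • (y - pr y)

section distFlowStep

variable {pr : EuclideanSpace ℝ (Fin n) → EuclideanSpace ℝ (Fin n)} {y : EuclideanSpace ℝ (Fin n)}
  {h κ : ℝ}

theorem norm_distFlowStep_sub (hy : y ≠ pr y) (hh : 0 ≤ h) : ‖distFlowStep pr h y - y‖ = h := by
  have hd : ‖y - pr y‖ ≠ 0 := norm_ne_zero_iff.2 (sub_ne_zero.2 hy)
  rw [distFlowStep, add_sub_cancel_left, norm_smul, Real.norm_of_nonneg (by positivity),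
    div_mul_cancel₀ h hd]

theorem add_mul_le_norm_distFlowStep_sub (hpr : ∀ y, IsProjPt C y (pr y)) (hy : y ≠ pr y)
    (hh : 0 ≤ h) (hκ0 : 0 ≤ κ) (hκ1 : κ ≤ 1)
    (hmod : ‖pr y - pr (distFlowStep pr h y)‖ ≤ κ * ‖y - pr y‖) :
    ‖y - pr y‖ + h * (1 - κ) ≤ ‖distFlowStep pr h y - pr (distFlowStep pr h y)‖ := by
  set y' := distFlowStep pr h y
  set d := ‖y - pr y‖ with hd_def
  set e := y' - y with he_def
  have hd : 0 < d := norm_pos_iff.2 (sub_ne_zero.2 hy)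
  have he : e = (h / d) • (y - pr y) := add_sub_cancel_left _ _
  have he_norm : ‖e‖ = h := norm_distFlowStep_sub hy hh
  have he_inner : ⟪y - pr y, e⟫ = h * d := by
    rw [he, real_inner_smul_right, real_inner_self_eq_norm_sq, ← hd_def]
    field_simp
  have hsplit : ⟪y' - pr y', e⟫ = ⟪y - pr y, e⟫ + ‖e‖ ^ 2 + ⟪pr y - pr y', e⟫ := by
    rw [← real_inner_self_eq_norm_sq, ← inner_add_left, ← inner_add_left, he_def]
    congr 1
    abel
  have hdrift : -(κ * d * h) ≤ ⟪pr y - pr y', e⟫ := by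
    have := (abs_real_inner_le_norm (pr y - pr y') e).trans
      (mul_le_mul hmod he_norm.le (norm_nonneg e) (by positivity))
    linarith [neg_abs_le ⟪pr y - pr y', e⟫]
  have hopt : d ^ 2 ≤ ‖(y' - pr y') - e‖ ^ 2 := by
    rw [sub_sub_sub_cancel_left]
    gcongr
    exact (hpr y).2 _ (hpr y').1
  rw [norm_sub_sq_real (y' - pr y') e, hsplit, he_inner, he_norm] at hopt
  have hsq : (d + h * (1 - κ)) ^ 2 ≤ ‖y' - pr y'‖ ^ 2 := by nlinarith [sq_nonneg (h * κ)]
  exact (pow_le_pow_iff_left₀ (by nlinarith) (norm_nonneg _) two_ne_zero).1 hsq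

theorem distFlowStep_iterate_bounds (hpr : ∀ y, IsProjPt C y (pr y)) (hy : y ≠ pr y)
    (hh : 0 < h) (hκ0 : 0 ≤ κ) (hκ1 : κ ≤ 1) {N : ℕ}
    (hmod : ∀ z ∈ closedBall y (N * h), ∀ z' ∈ closedBall y (N * h), ‖z - z'‖ ≤ h →
      ‖pr z - pr z'‖ ≤ κ * ‖y - pr y‖) :
    ∀ i ≤ N, ‖(distFlowStep pr h)^[i] y - y‖ ≤ i * h ∧
      ‖y - pr y‖ + i * h * (1 - κ) ≤
        ‖(distFlowStep pr h)^[i] y - pr ((distFlowStep pr h)^[i] y)‖ := by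
  intro i
  induction i with
  | zero => simp
  | succ i ih =>
    intro hi
    obtain ⟨hdist, hgrow⟩ := ih (by omega)
    rw [Function.iterate_succ_apply']
    set z := (distFlowStep pr h)^[i] y
    have hiN : ((i : ℝ) + 1) * h ≤ N * h := by gcongr; exact_mod_cast hi
    have hgrow₀ : ‖y - pr y‖ ≤ ‖z - pr z‖ := by
      nlinarith [mul_nonneg (mul_nonneg i.cast_nonneg hh.le) (sub_nonneg.2 hκ1)]
    have hz : z ≠ pr z := by
      rw [← sub_ne_zero, ← norm_pos_iff]
      exact (norm_pos_iff.2 (sub_ne_zero.2 hy)).trans_le hgrow₀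
    have hstep := norm_distFlowStep_sub hz hh.le
    have hdist' : ‖distFlowStep pr h z - y‖ ≤ ((i : ℝ) + 1) * h := by
      linarith [norm_sub_le_norm_sub_add_norm_sub (distFlowStep pr h z) z y]
    have hmem : ∀ {t}, ‖t - y‖ ≤ ((i : ℝ) + 1) * h → t ∈ closedBall y (N * h) := fun ht =>
      mem_closedBall_iff_norm.2 (ht.trans hiN)
    have hmod_z : ‖pr z - pr (distFlowStep pr h z)‖ ≤ κ * ‖z - pr z‖ :=
      (hmod z (hmem (by nlinarith)) _ (hmem hdist') (by rw [norm_sub_rev, hstep])).trans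
        (by gcongr)
    have := add_mul_le_norm_distFlowStep_sub hpr hz hh.le hκ0 hκ1 hmod_z
    push_cast
    constructor <;> nlinarith

end distFlowStep

theorem ProjUniqueOn.exists_far_point (hC : IsClosed C)
    {y₀ p₀ : EuclideanSpace ℝ (Fin n)} (hp₀ : IsProjPt C y₀ p₀) (hy₀ : y₀ ≠ p₀) {T κ : ℝ}
    (hT : 0 < T) (hκ0 : 0 < κ) (hκ1 : κ ≤ 1) (huniq : ProjUniqueOn C (closedBall y₀ T)) :
    ∃ y p, IsProjPt C y p ∧ ‖y - y₀‖ ≤ T ∧ ‖y₀ - p₀‖ + T * (1 - κ) ≤ ‖y - p‖ := by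
  choose pr hpr using IsProjPt.exists_of_isClosed hC ⟨p₀, hp₀.1⟩
  obtain rfl : pr y₀ = p₀ := huniq y₀ (mem_closedBall_self hT.le) _ _ (hpr y₀) hp₀
  obtain ⟨η, hη, hmod⟩ := huniq.exists_modulus hC ⟨_, hp₀.1⟩ (isCompact_closedBall y₀ T)
    (mul_pos hκ0 (norm_pos_iff.2 (sub_ne_zero.2 hy₀)))
  obtain ⟨N, hN⟩ := exists_nat_gt (T / η)
  have hN0 : (0 : ℝ) < N := (div_pos hT hη).trans hN
  have hNh : N * (T / N) = T := mul_div_cancel₀ T hN0.ne'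
  have hhη : T / N ≤ η := by
    rw [div_le_iff₀ hN0, mul_comm]
    exact ((div_lt_iff₀ hη).1 hN).le
  obtain ⟨hdist, hgrow⟩ := distFlowStep_iterate_bounds hpr hy₀ (div_pos hT hN0) hκ0.le hκ1
    (N := N) (fun z hz z' hz' hzz' => hmod z (hNh ▸ hz) z' (hNh ▸ hz') _ _ (hzz'.trans hhη)
      (hpr z) (hpr z')) N le_rfl
  rw [hNh] at hdist hgrow
  exact ⟨_, _, hpr _, hdist, hgrow⟩

theorem norm_sub_smul_sq_le_of_le_norm_add_smul {F : Type*} [NormedAddCommGroup F]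
    [InnerProductSpace ℝ F] {e v : F} (hv : ‖v‖ = 1) {σ T κ : ℝ} (hσ : 0 < σ) (hT : 0 ≤ T)
    (hκ1 : κ ≤ 1) (he : ‖e‖ ≤ T) (hfar : σ + T * (1 - κ) ≤ ‖e + σ • v‖) :
    σ * ‖e - T • v‖ ^ 2 ≤ 2 * κ * T ^ 2 * (σ + T) := by
  have hplus : ‖e + σ • v‖ ^ 2 = ‖e‖ ^ 2 + 2 * σ * ⟪e, v⟫ + σ ^ 2 := by
    rw [norm_add_sq_real, real_inner_smul_right, norm_smul, hv, Real.norm_of_nonneg hσ.le]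
    ring
  have hminus : ‖e - T • v‖ ^ 2 = ‖e‖ ^ 2 - 2 * T * ⟪e, v⟫ + T ^ 2 := by
    rw [norm_sub_sq_real, real_inner_smul_right, norm_smul, hv, Real.norm_of_nonneg hT]
    ring
  have hfar_sq : (σ + T * (1 - κ)) ^ 2 ≤ ‖e + σ • v‖ ^ 2 :=
    pow_le_pow_left₀ (by nlinarith) hfar 2
  have he_sq : ‖e‖ ^ 2 ≤ T ^ 2 := pow_le_pow_left₀ (norm_nonneg e) he 2
  rw [hplus] at hfar_sq
  rw [hminus]
  nlinarith [mul_le_mul_of_nonneg_left hfar_sq hT, mul_le_mul_of_nonneg_left he_sq hσ.le,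
    mul_le_mul_of_nonneg_left he_sq hT, mul_nonneg (pow_nonneg hT 3) (sq_nonneg κ)]

theorem ProjUniqueOn.isProjPt_add_smul (hC : IsClosed C)
    {q v : EuclideanSpace ℝ (Fin n)} (hv : ‖v‖ = 1) {σ ρ : ℝ} (hσ : 0 < σ) (hσρ : σ ≤ ρ)
    (huniq : ProjUniqueOn C (closedBall (q + σ • v) (ρ - σ)))
    (hstart : IsProjPt C (q + σ • v) q) : IsProjPt C (q + ρ • v) q := by
  have hray : ∀ t, 0 ≤ t → ‖q + t • v - q‖ = t := fun t ht => by
    rw [add_sub_cancel_left, norm_smul, hv, mul_one, Real.norm_of_nonneg ht]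
  refine ⟨hstart.1, fun c hc => ?_⟩
  rw [hray ρ (hσ.le.trans hσρ)]
  by_contra! hcloser
  set γ := ρ - ‖q + ρ • v - c‖ with hγ
  have hγ0 : 0 < γ := by linarith
  obtain rfl | hσρ := hσρ.eq_or_lt
  · linarith [hray σ hσ.le ▸ hstart.2 c hc]
  set T := ρ - σ with hT
  have hT0 : 0 < T := sub_pos.2 hσρ
  -- `κ` is small enough that both the growth lost along the polygon (`κ T`) and its deviation
  -- from the ray (`A` below) stay under `γ / 2`
  obtain ⟨κ, ⟨hκ1, hκT, hκA⟩, hκ0⟩ : ∃ κ,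
      (κ ≤ 1 ∧ κ * T < γ / 2 ∧ 2 * κ * T ^ 2 * (σ + T) < σ * (γ / 2) ^ 2) ∧ 0 < κ := by
    have hsmall : ∀ᶠ κ in 𝓝 (0 : ℝ),
        κ ≤ 1 ∧ κ * T < γ / 2 ∧ 2 * κ * T ^ 2 * (σ + T) < σ * (γ / 2) ^ 2 :=
      (eventually_le_nhds one_pos).and <|
        (((continuous_mul_const T).tendsto' 0 0 (zero_mul T)).eventually_lt_const
          (half_pos hγ0)).and <|
        ((by fun_prop : Continuous fun κ : ℝ => 2 * κ * T ^ 2 * (σ + T)).tendsto' 0 0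
          (by ring)).eventually_lt_const (by positivity)
    exact ((hsmall.filter_mono nhdsWithin_le_nhds).and self_mem_nhdsWithin).exists
      (f := 𝓝[>] 0)
  have hq : q + σ • v ≠ q := fun h => hσ.ne (by simpa [h] using hray σ hσ.le)
  obtain ⟨y, p, hp, hyT, hfar⟩ := huniq.exists_far_point hC hstart hq hT0 hκ0 hκ1
  rw [hray σ hσ.le] at hfar
  have hyq : σ + T * (1 - κ) ≤ ‖(y - (q + σ • v)) + σ • v‖ := by
    rw [sub_add_eq_sub_sub, sub_add_cancel]
    exact hfar.trans (hp.2 q hstart.1)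
  set A := ‖y - (q + σ • v) - T • v‖
  have hA : A < γ / 2 := by
    have hA_sq : A ^ 2 < (γ / 2) ^ 2 := lt_of_mul_lt_mul_left
      ((norm_sub_smul_sq_le_of_le_norm_add_smul hv hσ hT0.le hκ1 hyT hyq).trans_lt hκA) hσ.le
    exact (pow_lt_pow_iff_left₀ (norm_nonneg _) (by positivity) two_ne_zero).1 hA_sq
  have hyc : ‖y - c‖ ≤ ‖q + ρ • v - c‖ + A := by
    calc ‖y - c‖ = ‖(q + ρ • v - c) + (y - (q + σ • v) - T • v)‖ := by
          congr 1; rw [hT]; module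
      _ ≤ _ := norm_add_le _ _
  linarith [hp.2 c hc]

theorem ProjUniqueOn.isProjPt_of_mem_proxNormalCone (hC : IsClosed C)
    {q v : EuclideanSpace ℝ (Fin n)} (hv : v ∈ proxNormalCone C q)
    (hv0 : v ≠ 0) {ρ : ℝ} (hρ : 0 < ρ) (huniq : ProjUniqueOn C (closedBall q ρ)) :
    IsProjPt C (q + ρ • (‖v‖⁻¹ • v)) q := by
  obtain ⟨t, ht, y, hy, rfl⟩ := hv
  have hyq : y - q ≠ 0 := fun h => hv0 (by rw [h, smul_zero])
  have ht0 : 0 < t := ht.lt_of_ne (by rintro rfl; exact hv0 (zero_smul _ _))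
  have hd : 0 < ‖y - q‖ := norm_pos_iff.2 hyq
  have hunit : ‖t • (y - q)‖⁻¹ • t • (y - q) = ‖y - q‖⁻¹ • (y - q) := by
    rw [norm_smul, Real.norm_of_nonneg ht, smul_smul]
    congr 1
    field_simp
  have hunit_norm : ‖‖y - q‖⁻¹ • (y - q)‖ = 1 := by
    rw [norm_smul, norm_inv, norm_norm, inv_mul_cancel₀ hd.ne']
  rw [hunit]
  set σ := min ‖y - q‖ ρ
  have hσ : 0 < σ := lt_min hd hρ
  have hstart : IsProjPt C (q + σ • (‖y - q‖⁻¹ • (y - q))) q := by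
    have := hy.add_smul_sub (s := σ / ‖y - q‖) (by positivity)
      ((div_le_one hd).2 (min_le_left _ _))
    rwa [smul_smul, ← div_eq_mul_inv]
  have hball : closedBall (q + σ • (‖y - q‖⁻¹ • (y - q))) (ρ - σ) ⊆ closedBall q ρ := by
    refine closedBall_subset_closedBall' (le_of_eq ?_)
    rw [dist_eq_norm, add_sub_cancel_left, norm_smul, hunit_norm, Real.norm_of_nonneg hσ.le]
    ring
  exact (huniq.mono hball).isProjPt_add_smul hC hunit_norm hσ (min_le_right _ _) hstart

theorem ProjUniqueOn.isProjPt_of_mem_limitingNormalCone (hC : IsClosed C)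
    {x w : EuclideanSpace ℝ (Fin n)} (hw : w ∈ limitingNormalCone C x)
    (hw0 : w ≠ 0) {ρ ε : ℝ} (hρ : 0 < ρ) (hρε : ρ < ε) (huniq : ProjUniqueOn C (ball x ε)) :
    IsProjPt C (x + ρ • (‖w‖⁻¹ • w)) x := by
  obtain ⟨Q, V, -, hV, hQ, hVw⟩ := hw
  have hdir : Tendsto (fun j => ‖V j‖⁻¹ • V j) atTop (𝓝 (‖w‖⁻¹ • w)) :=
    ((continuousAt_id.norm.inv₀ (norm_ne_zero_iff.2 hw0)).smul continuousAt_id).tendsto.comp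
      hVw
  refine .of_tendsto hC (hQ.add (hdir.const_smul ρ)) hQ ?_
  filter_upwards [hVw.eventually_ne hw0, hQ (ball_mem_nhds x (sub_pos.2 hρε))] with j hVj hQj
  have hball : closedBall (Q j) ρ ⊆ ball x ε :=
    closedBall_subset_ball' (by linarith [mem_ball.1 hQj])
  exact (huniq.mono hball).isProjPt_of_mem_proxNormalCone hC (hV j) hVj hρ

theorem ProjUniqueOn.inner_le_of_mem_limitingNormalCone (hC : IsClosed C)
    {x w c : EuclideanSpace ℝ (Fin n)} {ε : ℝ} (hε : 0 < ε)
    (huniq : ProjUniqueOn C (ball x ε)) (hw : w ∈ limitingNormalCone C x) (hc : c ∈ C) :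
    ⟪w, c - x⟫ ≤ ‖w‖ / ε * ‖c - x‖ ^ 2 := by
  rcases eq_or_ne w 0 with rfl | hw0
  · simp
  have key := (huniq.isProjPt_of_mem_limitingNormalCone hC hw hw0 (half_pos hε)
    (half_lt_self hε)).two_inner_le hc
  rw [add_sub_cancel_left, smul_smul, real_inner_smul_left] at key
  have hw' : 0 < ‖w‖ := norm_pos_iff.2 hw0
  calc ⟪w, c - x⟫ = ‖w‖ / ε * (2 * (ε / 2 * ‖w‖⁻¹ * ⟪w, c - x⟫)) := by field_simp
    _ ≤ ‖w‖ / ε * ‖c - x‖ ^ 2 := by gcongr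

theorem IsProjPt.half_le_of_ne
    {x v y u : EuclideanSpace ℝ (Fin n)} {δ M : ℝ} (hu : IsProjPt C y u) (hx : x ∈ C)
    (hne : u ≠ x) (hδ : 0 < δ) (hM : ∀ w ∈ ball v δ, ⟪w, u - x⟫ ≤ M * ‖u - x‖ ^ 2) :
    δ / 2 ≤ ‖y - (x + v)‖ + M * ‖u - x‖ := by
  set d := u - x with hd_def
  set e := y - (x + v) with he_def
  have hd : 0 < ‖d‖ := norm_pos_iff.2 (sub_ne_zero.2 hne)
  have hunit_norm : ‖‖d‖⁻¹ • d‖ = 1 := by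
    rw [norm_smul, norm_inv, norm_norm, inv_mul_cancel₀ hd.ne']
  have hnormal := hM (v + (δ / 2) • (‖d‖⁻¹ • d)) (by
    rw [mem_ball_iff_norm, add_sub_cancel_left, norm_smul, hunit_norm,
      Real.norm_of_nonneg (half_pos hδ).le]
    linarith)
  rw [inner_add_left, real_inner_smul_left, real_inner_smul_left, real_inner_self_eq_norm_sq,
    inv_mul_eq_div, pow_two, mul_div_cancel_right₀ _ hd.ne'] at hnormal
  have hproj := hu.two_inner_le hx
  rw [show y - u = e + v - d by rw [hd_def, he_def]; abel,
    show x - u = -d by rw [hd_def]; abel, inner_neg_right, inner_sub_left, inner_add_left,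
    real_inner_self_eq_norm_sq, norm_neg] at hproj
  have hcs : ⟪e, d⟫ ≤ ‖e‖ * ‖d‖ := real_inner_le_norm e d
  refine le_of_mul_le_mul_right ?_ hd
  nlinarith

end

theorem stmt12_general (C : Set (EuclideanSpace ℝ (Fin n))) (hC : IsClosed C)
    (x u z : ℕ → EuclideanSpace ℝ (Fin n))
    (hu : ∀ k : ℕ, IsProjPt C (2 • x (k + 1) - z k) (u (k + 1)))
    (zstar xstar : EuclideanSpace ℝ (Fin n))
    (hzlim : Tendsto z atTop (nhds zstar))
    (hulim : Tendsto u atTop (nhds xstar))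
    (hxlim : Tendsto x atTop (nhds xstar))
    -- `C` is prox-regular at `xstar` for `xstar - zstar`
    (hproxreg : IsProjPt C (xstar + (xstar - zstar)) xstar ∧
      ∀ w, IsProjPt C (xstar + (xstar - zstar)) w → w = xstar)
    -- `P_C` is single-valued on a neighborhood of `xstar`
    (hsingle : ∃ ε > 0, ∀ y ∈ Metric.ball (xstar : EuclideanSpace ℝ (Fin n)) ε,
      ∀ w w', IsProjPt C y w → IsProjPt C y w' → w = w')
    -- non-degeneracy condition
    (hndc : xstar - zstar ∈ interior (limitingNormalCone C xstar)) :
    ∃ K : ℕ, ∀ k : ℕ, K ≤ k → u k = xstar := by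
  obtain ⟨ε, hε, huniq⟩ : ∃ ε > 0, ProjUniqueOn C (ball xstar ε) := hsingle
  obtain ⟨δ, hδ, hδN⟩ := Metric.mem_nhds_iff.1 (mem_interior_iff_mem_nhds.1 hndc)
  set M := (‖xstar - zstar‖ + δ) / ε with hM_def
  have hM : ∀ c ∈ C, ∀ w ∈ ball (xstar - zstar) δ, ⟪w, c - xstar⟫ ≤ M * ‖c - xstar‖ ^ 2 :=
    fun c hc w hw => (huniq.inner_le_of_mem_limitingNormalCone hC hε (hδN hw) hc).trans <| by
      rw [hM_def]
      gcongr
      linarith [norm_le_norm_add_norm_sub' w (xstar - zstar), mem_ball_iff_norm.1 hw]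
  have hreflect :
      Tendsto (fun k => 2 • x (k + 1) - z k) atTop (𝓝 (xstar + (xstar - zstar))) := by
    convert (((tendsto_add_atTop_iff_nat 1).2 hxlim).const_smul 2).sub hzlim using 2
    rw [two_nsmul]; abel
  have hgap : Tendsto (fun k => ‖2 • x (k + 1) - z k - (xstar + (xstar - zstar))‖ +
      M * ‖u (k + 1) - xstar‖) atTop (𝓝 0) := by
    have hshadow := (tendsto_add_atTop_iff_nat 1).2 hulim
    simpa using (tendsto_iff_norm_sub_tendsto_zero.1 hreflect).add
      ((tendsto_iff_norm_sub_tendsto_zero.1 hshadow).const_mul M)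
  obtain ⟨K, hK⟩ := eventually_atTop.1 (hgap.eventually_lt_const (half_pos hδ))
  refine ⟨K + 1, fun k hk => ?_⟩
  obtain ⟨k, rfl⟩ : ∃ j, k = j + 1 := ⟨k - 1, by omega⟩
  by_contra hne
  exact (hK k (by omega)).not_ge
    ((hu k).half_le_of_ne hproxreg.1.1 hne hδ (hM _ (hu k).1))

/-- Finite termination of the Douglas--Rachford shadow sequence. -/
theorem stmt12 (C : Set (EuclideanSpace ℝ (Fin n))) (hC : IsClosed C)
    (S : AffineSubspace ℝ (EuclideanSpace ℝ (Fin n)))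
    (hCS : (C ∩ (S : Set (EuclideanSpace ℝ (Fin n)))).Nonempty)
    (PS : EuclideanSpace ℝ (Fin n) → EuclideanSpace ℝ (Fin n))
    (hPS : IsMetricProj (S : Set (EuclideanSpace ℝ (Fin n))) PS)
    (x u z : ℕ → EuclideanSpace ℝ (Fin n))
    (hx : ∀ k : ℕ, x (k + 1) = PS (z k))
    (hu : ∀ k : ℕ, IsProjPt C (2 • x (k + 1) - z k) (u (k + 1)))
    (hz : ∀ k : ℕ, z (k + 1) = z k + u (k + 1) - x (k + 1))
    (zstar xstar : EuclideanSpace ℝ (Fin n))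
    (hzlim : Tendsto z atTop (nhds zstar))
    (hulim : Tendsto u atTop (nhds xstar))
    (hxlim : Tendsto x atTop (nhds xstar))
    (hxstar : xstar = PS zstar)
    -- `C` is prox-regular at `xstar` for `xstar - zstar`
    (hproxreg : IsProjPt C (xstar + (xstar - zstar)) xstar ∧
      ∀ w, IsProjPt C (xstar + (xstar - zstar)) w → w = xstar)
    -- `P_C` is single-valued on a neighborhood of `xstar`
    (hsingle : ∃ ε > 0, ∀ y ∈ Metric.ball (xstar : EuclideanSpace ℝ (Fin n)) ε,
      ∀ w w', IsProjPt C y w → IsProjPt C y w' → w = w')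
    -- non-degeneracy condition
    (hndc : xstar - zstar ∈ interior (limitingNormalCone C xstar)) :
    ∃ K : ℕ, ∀ k : ℕ, K ≤ k → u k = xstar :=
  stmt12_general C hC x u z hu zstar xstar hzlim hulim hxlim hproxreg hsingle hndc
end

section
/- If T₁, T₂ ⊆ ℝ^n are linear subspaces with d = dim(T₁ ∩ T₂), then the Friedrichs angle between T₁ and T₂ equals the (d+1)-st principal angle: θ_F(T₁,T₂) = θ_{d+1}, and θ_F(T₁,T₂) > 0. -/
open scoped RealInnerProductSpace

/-- Friedrichs angle equals the `(d+1)`-st principal angle, and it is positive. -/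
theorem stmt15 {n p : ℕ}
    (T₁ T₂ : Submodule ℝ (EuclideanSpace ℝ (Fin n)))
    (hp : p = min (Module.finrank ℝ T₁) (Module.finrank ℝ T₂))
    (θ : Fin p → ℝ) (u v : Fin p → EuclideanSpace ℝ (Fin n))
    -- recursive definition of the principal angles θ₁ ≤ ⋯ ≤ θ_p and principal vectors
    (hθrange : ∀ i, θ i ∈ Set.Icc (0 : ℝ) (Real.pi / 2))
    (hu : ∀ i, u i ∈ T₁) (hv : ∀ i, v i ∈ T₂)
    (hunorm : ∀ i, ‖u i‖ = 1) (hvnorm : ∀ i, ‖v i‖ = 1)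
    (huorth : ∀ i j : Fin p, j < i → ⟪u i, u j⟫ = 0)
    (hvorth : ∀ i j : Fin p, j < i → ⟪v i, v j⟫ = 0)
    (hcos : ∀ i, Real.cos (θ i) = ⟪u i, v i⟫)
    (hmax : ∀ i : Fin p, ∀ a ∈ T₁, ∀ b ∈ T₂, ‖a‖ = 1 → ‖b‖ = 1 →
      (∀ j : Fin p, j < i → ⟪a, u j⟫ = 0 ∧ ⟪b, v j⟫ = 0) → ⟪a, b⟫ ≤ ⟪u i, v i⟫)
    -- the Friedrichs angle θF
    (θF : ℝ) (hθFrange : θF ∈ Set.Icc (0 : ℝ) (Real.pi / 2))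
    (uF vF : EuclideanSpace ℝ (Fin n))
    (huF : uF ∈ T₁ ⊓ (T₁ ⊓ T₂)ᗮ) (hvF : vF ∈ T₂ ⊓ (T₁ ⊓ T₂)ᗮ)
    (huFnorm : ‖uF‖ = 1) (hvFnorm : ‖vF‖ = 1)
    (hcosF : Real.cos θF = ⟪uF, vF⟫)
    (hmaxF : ∀ a ∈ T₁ ⊓ (T₁ ⊓ T₂)ᗮ, ∀ b ∈ T₂ ⊓ (T₁ ⊓ T₂)ᗮ,
      ‖a‖ = 1 → ‖b‖ = 1 → ⟪a, b⟫ ≤ ⟪uF, vF⟫)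
    (d : ℕ) (hd : d = Module.finrank ℝ (T₁ ⊓ T₂ : Submodule ℝ (EuclideanSpace ℝ (Fin n))))
    (hdp : d < p) :
    θF = θ ⟨d, hdp⟩ ∧ 0 < θF := by
  classical
  set W : Submodule ℝ (EuclideanSpace ℝ (Fin n)) := T₁ ⊓ T₂ with hW
  -- the family u is orthonormal
  have huON : Orthonormal ℝ u := by
    rw [orthonormal_iff_ite]
    intro i j
    rcases lt_trichotomy i j with h | h | h
    · rw [if_neg h.ne, real_inner_comm]; exact huorth j i h
    · subst h; rw [if_pos rfl, real_inner_self_eq_norm_sq, hunorm i]; norm_num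
    · rw [if_neg h.ne']; exact huorth i j h
  -- principal vectors below index d coincide and lie in the intersection
  have key : ∀ k : ℕ, ∀ hk : k < d,
      u ⟨k, hk.trans hdp⟩ = v ⟨k, hk.trans hdp⟩ ∧ u ⟨k, hk.trans hdp⟩ ∈ W := by
    intro k
    induction k using Nat.strong_induction_on with
    | _ k IH =>
      intro hk
      set i : Fin p := ⟨k, hk.trans hdp⟩ with hi
      -- span of the previous principal vectors
      set g : Fin k → Fin p := fun j => ⟨j, j.2.trans (hk.trans hdp)⟩ with hg
      have hginj : Function.Injective g := by
        intro a b hab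
        simpa [hg, Fin.ext_iff] using hab
      have hfON : Orthonormal ℝ (u ∘ g) := huON.comp g hginj
      set S : Submodule ℝ (EuclideanSpace ℝ (Fin n)) :=
        Submodule.span ℝ (Set.range (u ∘ g)) with hS
      have hSrank : Module.finrank ℝ S = k := by
        rw [hS, finrank_span_eq_card hfON.linearIndependent]
        simp
      have hne : W ⊓ Sᗮ ≠ ⊥ := by
        intro hbot
        have h1 := Submodule.finrank_sup_add_finrank_inf_eq W Sᗮ
        rw [hbot] at h1
        have h2 : Module.finrank ℝ ((W ⊔ Sᗮ : Submodule ℝ (EuclideanSpace ℝ (Fin n)))) ≤ n := by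
          simpa using Submodule.finrank_le (W ⊔ Sᗮ)
        have h3 := Submodule.finrank_add_finrank_orthogonal S
        rw [finrank_euclideanSpace_fin] at h3
        rw [finrank_bot] at h1
        omega
      obtain ⟨w₀, hw₀, hw₀ne⟩ := Submodule.exists_mem_ne_zero_of_ne_bot hne
      set w : EuclideanSpace ℝ (Fin n) := ‖w₀‖⁻¹ • w₀ with hw
      have hwnorm : ‖w‖ = 1 := norm_smul_inv_norm hw₀ne
      have hwW : w ∈ W := W.smul_mem _ hw₀.1
      have hwS : w ∈ Sᗮ := Sᗮ.smul_mem _ hw₀.2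
      have horth : ∀ j : Fin p, j < i → ⟪w, u j⟫ = 0 ∧ ⟪w, v j⟫ = 0 := by
        intro j hj
        have hjk : (j : ℕ) < k := hj
        have hjfin : (⟨(j : ℕ), hjk.trans hk |>.trans hdp⟩ : Fin p) = j := by
          ext; rfl
        have hujS : u j ∈ S := by
          apply Submodule.subset_span
          exact ⟨⟨(j : ℕ), hjk⟩, by simp [hg, hjfin]⟩
        have h1 : ⟪w, u j⟫ = 0 := by
          rw [real_inner_comm]
          exact hwS (u j) hujS
        refine ⟨h1, ?_⟩
        have huvj := (IH (j : ℕ) hjk (hjk.trans hk)).1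
        rw [hjfin] at huvj
        rw [← huvj]
        exact h1
      have hle : (1 : ℝ) ≤ ⟪u i, v i⟫ := by
        have := hmax i w (hW ▸ hwW).1 w (hW ▸ hwW).2 hwnorm hwnorm horth
        rwa [real_inner_self_eq_norm_sq, hwnorm, one_pow] at this
      have hge : ⟪u i, v i⟫ ≤ 1 := by
        have := real_inner_le_norm (u i) (v i)
        rwa [hunorm i, hvnorm i, one_mul] at this
      have huv : ⟪u i, v i⟫ = 1 := le_antisymm hge hle
      have hueq : u i = v i := (inner_eq_one_iff_of_norm_eq_one (hunorm i) (hvnorm i)).mp huv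
      exact ⟨hueq, ⟨hu i, hueq ▸ hv i⟩⟩
  -- the first d principal vectors span the intersection
  set U : Fin d → EuclideanSpace ℝ (Fin n) := fun j => u ⟨j, j.2.trans hdp⟩ with hU
  have hUW : ∀ j : Fin d, U j ∈ W := fun j => (key j j.2).2
  have hUON : Orthonormal ℝ U := by
    apply huON.comp (fun j : Fin d => (⟨j, j.2.trans hdp⟩ : Fin p))
    intro a b hab
    simpa [Fin.ext_iff] using hab
  have hspan : Submodule.span ℝ (Set.range U) = W := by
    apply Submodule.eq_of_le_of_finrank_eq
    · rw [Submodule.span_le]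
      rintro x ⟨j, rfl⟩
      exact hUW j
    · rw [finrank_span_eq_card hUON.linearIndependent, ← hd]
      simp
  -- orthogonality to the first d principal vectors means orthogonality to W
  have hperp : ∀ x : EuclideanSpace ℝ (Fin n),
      (∀ j : Fin p, (j : ℕ) < d → ⟪x, u j⟫ = 0) → x ∈ Wᗮ := by
    intro x hx
    rw [Submodule.mem_orthogonal]
    intro y hy
    rw [← hspan] at hy
    induction hy using Submodule.span_induction with
    | mem z hz =>
      obtain ⟨j, rfl⟩ := hz
      rw [real_inner_comm]
      exact hx ⟨j, j.2.trans hdp⟩ j.2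
    | zero => simp
    | add a b _ _ ha hb => rw [inner_add_left, ha, hb, add_zero]
    | smul c a _ ha => rw [real_inner_smul_left, ha, mul_zero]
  have hud_perp : u ⟨d, hdp⟩ ∈ Wᗮ :=
    hperp _ fun j hj => huorth ⟨d, hdp⟩ j hj
  have hvd_perp : v ⟨d, hdp⟩ ∈ Wᗮ := by
    apply hperp
    intro j hj
    have huvj := (key (j : ℕ) hj).1
    have hjfin : (⟨(j : ℕ), hj.trans hdp⟩ : Fin p) = j := by ext; rfl
    rw [hjfin] at huvj
    rw [huvj]
    exact hvorth ⟨d, hdp⟩ j hj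
  -- the two maxima agree
  have le1 : ⟪uF, vF⟫ ≤ ⟪u ⟨d, hdp⟩, v ⟨d, hdp⟩⟫ := by
    apply hmax ⟨d, hdp⟩ uF huF.1 vF hvF.1 huFnorm hvFnorm
    intro j hj
    have hujW : u j ∈ W := by
      have := (key (j : ℕ) hj).2
      have hjfin : (⟨(j : ℕ), (show (j:ℕ) < d from hj).trans hdp⟩ : Fin p) = j := by ext; rfl
      rwa [hjfin] at this
    have huvj := (key (j : ℕ) hj).1
    have hjfin : (⟨(j : ℕ), (show (j:ℕ) < d from hj).trans hdp⟩ : Fin p) = j := by ext; rfl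
    rw [hjfin] at huvj
    constructor
    · rw [real_inner_comm]; exact huF.2 (u j) hujW
    · rw [real_inner_comm]; exact hvF.2 (v j) (huvj ▸ hujW)
  have le2 : ⟪u ⟨d, hdp⟩, v ⟨d, hdp⟩⟫ ≤ ⟪uF, vF⟫ :=
    hmaxF (u ⟨d, hdp⟩) ⟨hu _, hud_perp⟩ (v ⟨d, hdp⟩) ⟨hv _, hvd_perp⟩ (hunorm _) (hvnorm _)
  have heq : ⟪uF, vF⟫ = ⟪u ⟨d, hdp⟩, v ⟨d, hdp⟩⟫ := le_antisymm le1 le2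
  -- strict positivity of the Friedrichs angle
  have hFlt : ⟪uF, vF⟫ < 1 := by
    rcases lt_or_eq_of_le (by
      have := real_inner_le_norm uF vF
      rwa [huFnorm, hvFnorm, one_mul] at this) with h | h
    · exact h
    · exfalso
      have huveq : uF = vF := (inner_eq_one_iff_of_norm_eq_one huFnorm hvFnorm).mp h
      have huFW : uF ∈ W := ⟨huF.1, huveq ▸ hvF.1⟩
      have : ⟪uF, uF⟫ = 0 := huF.2 uF huFW
      rw [real_inner_self_eq_norm_sq, huFnorm] at this
      norm_num at this
  have hpi := Real.pi_pos
  have hθFle : θF ≤ Real.pi := le_trans hθFrange.2 (by linarith)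
  have hθdle : θ ⟨d, hdp⟩ ≤ Real.pi := le_trans (hθrange _).2 (by linarith)
  constructor
  · apply Real.injOn_cos ⟨hθFrange.1, hθFle⟩ ⟨(hθrange _).1, hθdle⟩
    rw [hcosF, hcos, heq]
  · rcases lt_or_eq_of_le hθFrange.1 with h | h
    · exact h
    · exfalso
      rw [← h, Real.cos_zero] at hcosF
      linarith
end
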